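/- arXiv:math/0603546 — 2 statements merged into one kernel-verified Lean document; each statement's English description precedes it below -/
import Mathlib

section
/- Let ξ : ℝ² × ℝ → ℝ² be a C³ solution of the Galbrun equation (∂_t + M ∂_x)² ξ − ∇(div ξ) = f in a uniform flow (M constant), with f C¹. Then ψ := curl ξ satisfies (∂_t + M ∂_x)² ψ = curl f, where curl v = ∂₁v₂ − ∂₂v₁ for a vector field v and the operations are applied in the space variables. -/
/-- Partial derivative in `x` of a scalar field `u x y t`. -/
noncomputable def pdx (u : ℝ → ℝ → ℝ → ℝ) (x y t : ℝ) : ℝ :=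
  deriv (fun a => u a y t) x

/-- Partial derivative in `y` of a scalar field `u x y t`. -/
noncomputable def pdy (u : ℝ → ℝ → ℝ → ℝ) (x y t : ℝ) : ℝ :=
  deriv (fun b => u x b t) y

/-- Partial derivative in `t` of a scalar field `u x y t`. -/
noncomputable def pdt (u : ℝ → ℝ → ℝ → ℝ) (x y t : ℝ) : ℝ :=
  deriv (fun s => u x y s) t

/-- Divergence of a planar vector field `v x y t : ℝ × ℝ`. -/
noncomputable def div2 (v : ℝ → ℝ → ℝ → ℝ × ℝ) (x y t : ℝ) : ℝ :=
  pdx (fun a b s => (v a b s).1) x y t + pdy (fun a b s => (v a b s).2) x y t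

/-- Scalar curl of a planar vector field: `∂₁v₂ - ∂₂v₁`. -/
noncomputable def curl2 (v : ℝ → ℝ → ℝ → ℝ × ℝ) (x y t : ℝ) : ℝ :=
  pdx (fun a b s => (v a b s).2) x y t - pdy (fun a b s => (v a b s).1) x y t

/-- Material derivative with constant Mach number. -/
noncomputable def matDeriv (M : ℝ) (u : ℝ → ℝ → ℝ → ℝ) (x y t : ℝ) : ℝ :=
  pdt u x y t + M * pdx u x y t

/-! With `D = ∂_t + M ∂_x`, the Galbrun equation says `f = D²ξ - ∇(div ξ)`. The operators
`∂_x`, `∂_y` and `D` are derivatives of space-time fields in the fixed directions `(1,0,0)`,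
`(0,1,0)` and `(M,0,1)`, so by Schwarz's theorem any two of them commute on `C²` fields.
Hence `D (curl v) = curl (D v)` and `curl (∇g) = 0`, and applying `curl` to the equation gives
`D² (curl ξ) = curl (D²ξ) - curl (∇ div ξ) = curl f`. -/

theorem fderiv_fderiv_apply_comm {E F : Type*} [NormedAddCommGroup E] [NormedSpace ℝ E]
    [NormedAddCommGroup F] [NormedSpace ℝ F] {g : E → F} {p : E} (hg : ContDiffAt ℝ 2 g p)
    (v w : E) :
    fderiv ℝ (fun q => fderiv ℝ g q w) p v = fderiv ℝ (fun q => fderiv ℝ g q v) p w := by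
  have hd : DifferentiableAt ℝ (fderiv ℝ g) p :=
    (hg.fderiv_right (m := 1) le_rfl).differentiableAt one_ne_zero
  rw [fderiv_clm_apply hd (differentiableAt_const w),
    fderiv_clm_apply hd (differentiableAt_const v)]
  simpa using hg.isSymmSndFDerivAt (by simp) v w

theorem ContDiff.differentiable_of_add_one_le {E F : Type*} [NormedAddCommGroup E]
    [NormedSpace ℝ E] [NormedAddCommGroup F] [NormedSpace ℝ F] {g : E → F} {m n : WithTop ℕ∞}
    (hg : ContDiff ℝ n g) (hmn : m + 1 ≤ n) : Differentiable ℝ g :=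
  hg.differentiable (zero_lt_one.trans_le (le_add_self.trans hmn)).ne'

def uncurry3 {α : Type*} (u : ℝ → ℝ → ℝ → α) : (ℝ × ℝ) × ℝ → α :=
  fun p => u p.1.1 p.1.2 p.2

noncomputable def dirDeriv (w : (ℝ × ℝ) × ℝ) (u : ℝ → ℝ → ℝ → ℝ) : ℝ → ℝ → ℝ → ℝ :=
  fun x y t => fderiv ℝ (uncurry3 u) ((x, y), t) w

def IsDirDeriv (D : (ℝ → ℝ → ℝ → ℝ) → ℝ → ℝ → ℝ → ℝ) (w : (ℝ × ℝ) × ℝ) : Prop :=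
  ∀ u, Differentiable ℝ (uncurry3 u) → D u = dirDeriv w u

section DirDeriv

variable {u v : ℝ → ℝ → ℝ → ℝ} {m n : WithTop ℕ∞}

theorem contDiff_dirDeriv (hu : ContDiff ℝ n (uncurry3 u)) (hmn : m + 1 ≤ n)
    (w : (ℝ × ℝ) × ℝ) : ContDiff ℝ m (uncurry3 (dirDeriv w u)) :=
  (hu.fderiv_right hmn).clm_apply contDiff_const

variable {D E : (ℝ → ℝ → ℝ → ℝ) → ℝ → ℝ → ℝ → ℝ} {w w' : (ℝ × ℝ) × ℝ}

theorem IsDirDeriv.contDiff (hD : IsDirDeriv D w) (hu : ContDiff ℝ n (uncurry3 u))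
    (hmn : m + 1 ≤ n) : ContDiff ℝ m (uncurry3 (D u)) := by
  rw [hD u (hu.differentiable_of_add_one_le hmn)]
  exact contDiff_dirDeriv hu hmn w

theorem IsDirDeriv.map_sub (hD : IsDirDeriv D w) (hu : Differentiable ℝ (uncurry3 u))
    (hv : Differentiable ℝ (uncurry3 v)) : D (u - v) = D u - D v := by
  rw [hD (u - v) (hu.sub hv), hD u hu, hD v hv]
  funext x y t
  exact congrArg (· w) (fderiv_sub (hu _) (hv _))

theorem IsDirDeriv.comm (hD : IsDirDeriv D w) (hE : IsDirDeriv E w')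
    (hu : ContDiff ℝ 2 (uncurry3 u)) : D (E u) = E (D u) := by
  have hu' : Differentiable ℝ (uncurry3 u) := hu.differentiable two_ne_zero
  have hdir (z : (ℝ × ℝ) × ℝ) : Differentiable ℝ (uncurry3 (dirDeriv z u)) :=
    (contDiff_dirDeriv hu (m := 1) le_rfl z).differentiable one_ne_zero
  rw [hE u hu', hD u hu', hD _ (hdir w'), hE _ (hdir w)]
  funext x y t
  exact fderiv_fderiv_apply_comm hu.contDiffAt w w'

end DirDeriv

theorem isDirDeriv_pdx : IsDirDeriv pdx ((1, 0), 0) := fun u hu => by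
  funext x y t
  have hline : HasDerivAt (fun a : ℝ => ((a, y), t)) ((1, 0), 0) x :=
    ((hasDerivAt_id x).prodMk (hasDerivAt_const x y)).prodMk (hasDerivAt_const x t)
  exact ((hu _).hasFDerivAt.comp_hasDerivAt x hline).deriv

theorem isDirDeriv_pdy : IsDirDeriv pdy ((0, 1), 0) := fun u hu => by
  funext x y t
  have hline : HasDerivAt (fun b : ℝ => ((x, b), t)) ((0, 1), 0) y :=
    ((hasDerivAt_const y x).prodMk (hasDerivAt_id y)).prodMk (hasDerivAt_const y t)
  exact ((hu _).hasFDerivAt.comp_hasDerivAt y hline).deriv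

theorem isDirDeriv_pdt : IsDirDeriv pdt ((0, 0), 1) := fun u hu => by
  funext x y t
  have hline : HasDerivAt (fun s : ℝ => ((x, y), s)) ((0, 0), 1) t :=
    ((hasDerivAt_const t x).prodMk (hasDerivAt_const t y)).prodMk (hasDerivAt_id t)
  exact ((hu _).hasFDerivAt.comp_hasDerivAt t hline).deriv

theorem isDirDeriv_matDeriv (M : ℝ) : IsDirDeriv (matDeriv M) ((M, 0), 1) := fun u hu => by
  funext x y t
  have hw : (((M, 0), 1) : (ℝ × ℝ) × ℝ) = ((0, 0), 1) + M • ((1, 0), 0) := by simp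
  rw [matDeriv, isDirDeriv_pdt u hu, isDirDeriv_pdx u hu]
  simp only [dirDeriv, hw, map_add, map_smul, smul_eq_mul]

noncomputable def matDerivVec (M : ℝ) (v : ℝ → ℝ → ℝ → ℝ × ℝ) : ℝ → ℝ → ℝ → ℝ × ℝ :=
  fun x y t => (matDeriv M (fun a b s => (v a b s).1) x y t,
    matDeriv M (fun a b s => (v a b s).2) x y t)

noncomputable def grad2 (g : ℝ → ℝ → ℝ → ℝ) : ℝ → ℝ → ℝ → ℝ × ℝ :=
  fun x y t => (pdx g x y t, pdy g x y t)

section VectorFields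

variable {v w : ℝ → ℝ → ℝ → ℝ × ℝ} {m n : WithTop ℕ∞}

theorem ContDiff.uncurry3_fst (hv : ContDiff ℝ n (uncurry3 v)) :
    ContDiff ℝ n (uncurry3 fun a b s => (v a b s).1) :=
  hv.fst

theorem ContDiff.uncurry3_snd (hv : ContDiff ℝ n (uncurry3 v)) :
    ContDiff ℝ n (uncurry3 fun a b s => (v a b s).2) :=
  hv.snd

theorem curl2_eq_sub (v : ℝ → ℝ → ℝ → ℝ × ℝ) :
    curl2 v = pdx (fun a b s => (v a b s).2) - pdy (fun a b s => (v a b s).1) :=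
  rfl

theorem contDiff_matDerivVec (M : ℝ) (hv : ContDiff ℝ n (uncurry3 v)) (hmn : m + 1 ≤ n) :
    ContDiff ℝ m (uncurry3 (matDerivVec M v)) :=
  ((isDirDeriv_matDeriv M).contDiff hv.uncurry3_fst hmn).prodMk
    ((isDirDeriv_matDeriv M).contDiff hv.uncurry3_snd hmn)

theorem contDiff_div2 (hv : ContDiff ℝ n (uncurry3 v)) (hmn : m + 1 ≤ n) :
    ContDiff ℝ m (uncurry3 (div2 v)) :=
  (isDirDeriv_pdx.contDiff hv.uncurry3_fst hmn).add (isDirDeriv_pdy.contDiff hv.uncurry3_snd hmn)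

theorem contDiff_grad2 {g : ℝ → ℝ → ℝ → ℝ} (hg : ContDiff ℝ n (uncurry3 g))
    (hmn : m + 1 ≤ n) : ContDiff ℝ m (uncurry3 (grad2 g)) :=
  (isDirDeriv_pdx.contDiff hg hmn).prodMk (isDirDeriv_pdy.contDiff hg hmn)

theorem curl2_sub (hv : ContDiff ℝ 1 (uncurry3 v)) (hw : ContDiff ℝ 1 (uncurry3 w)) :
    curl2 (v - w) = curl2 v - curl2 w := by
  have hx : pdx (fun a b s => ((v - w) a b s).2)
      = pdx (fun a b s => (v a b s).2) - pdx (fun a b s => (w a b s).2) :=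
    isDirDeriv_pdx.map_sub (hv.uncurry3_snd.differentiable one_ne_zero)
      (hw.uncurry3_snd.differentiable one_ne_zero)
  have hy : pdy (fun a b s => ((v - w) a b s).1)
      = pdy (fun a b s => (v a b s).1) - pdy (fun a b s => (w a b s).1) :=
    isDirDeriv_pdy.map_sub (hv.uncurry3_fst.differentiable one_ne_zero)
      (hw.uncurry3_fst.differentiable one_ne_zero)
  rw [curl2_eq_sub, curl2_eq_sub, curl2_eq_sub, hx, hy]
  abel

theorem matDeriv_curl2 (M : ℝ) (hv : ContDiff ℝ 2 (uncurry3 v)) :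
    matDeriv M (curl2 v) = curl2 (matDerivVec M v) := by
  have hx := isDirDeriv_pdx.contDiff hv.uncurry3_snd (m := 1) le_rfl
  have hy := isDirDeriv_pdy.contDiff hv.uncurry3_fst (m := 1) le_rfl
  calc matDeriv M (curl2 v)
      = matDeriv M (pdx fun a b s => (v a b s).2) - matDeriv M (pdy fun a b s => (v a b s).1) :=
        (isDirDeriv_matDeriv M).map_sub (hx.differentiable one_ne_zero)
          (hy.differentiable one_ne_zero)
    _ = curl2 (matDerivVec M v) := by
      rw [(isDirDeriv_matDeriv M).comm isDirDeriv_pdx hv.uncurry3_snd,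
        (isDirDeriv_matDeriv M).comm isDirDeriv_pdy hv.uncurry3_fst]
      rfl

theorem curl2_grad2 {g : ℝ → ℝ → ℝ → ℝ} (hg : ContDiff ℝ 2 (uncurry3 g)) :
    curl2 (grad2 g) = 0 := by
  funext x y t
  show pdx (pdy g) x y t - pdy (pdx g) x y t = 0
  rw [isDirDeriv_pdx.comm isDirDeriv_pdy hg, sub_self]

end VectorFields

theorem vorticity_equation_uniform_flow_general (M : ℝ)
    (ξ : ℝ → ℝ → ℝ → ℝ × ℝ) (f : ℝ → ℝ → ℝ → ℝ × ℝ)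
    (hξ : ContDiff ℝ 3 (fun p : (ℝ × ℝ) × ℝ => ξ p.1.1 p.1.2 p.2))
    (hgalbrun : ∀ x y t,
      matDeriv M (matDeriv M (fun a b s => (ξ a b s).1)) x y t
          - pdx (div2 ξ) x y t = (f x y t).1
      ∧ matDeriv M (matDeriv M (fun a b s => (ξ a b s).2)) x y t
          - pdy (div2 ξ) x y t = (f x y t).2) :
    ∀ x y t, matDeriv M (matDeriv M (curl2 ξ)) x y t = curl2 f x y t := by
  have hsource : f = matDerivVec M (matDerivVec M ξ) - grad2 (div2 ξ) := by
    funext x y t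
    exact Prod.ext (hgalbrun x y t).1.symm (hgalbrun x y t).2.symm
  have hDξ : ContDiff ℝ 2 (uncurry3 (matDerivVec M ξ)) := contDiff_matDerivVec M hξ (by norm_num)
  have hdiv : ContDiff ℝ 2 (uncurry3 (div2 ξ)) := contDiff_div2 hξ (by norm_num)
  have hcurl : matDeriv M (matDeriv M (curl2 ξ)) = curl2 f := by
    rw [matDeriv_curl2 M (hξ.of_le (by norm_num)), matDeriv_curl2 M hDξ, hsource,
      curl2_sub (contDiff_matDerivVec M hDξ (by norm_num)) (contDiff_grad2 hdiv (by norm_num)),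
      curl2_grad2 hdiv, sub_zero]
  exact fun x y t => congrFun₃ hcurl x y t

/-- In a uniform flow, the Lagrangian vorticity `ψ = curl ξ` of a solution of
the Galbrun equation satisfies `D²ψ/Dt² = curl f`. -/
theorem vorticity_equation_uniform_flow (M : ℝ)
    (ξ : ℝ → ℝ → ℝ → ℝ × ℝ) (f : ℝ → ℝ → ℝ → ℝ × ℝ)
    (hξ : ContDiff ℝ 3 (fun p : (ℝ × ℝ) × ℝ => ξ p.1.1 p.1.2 p.2))
    (hf : ContDiff ℝ 1 (fun p : (ℝ × ℝ) × ℝ => f p.1.1 p.1.2 p.2))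
    (hgalbrun : ∀ x y t,
      matDeriv M (matDeriv M (fun a b s => (ξ a b s).1)) x y t
          - pdx (div2 ξ) x y t = (f x y t).1
      ∧ matDeriv M (matDeriv M (fun a b s => (ξ a b s).2)) x y t
          - pdy (div2 ξ) x y t = (f x y t).2) :
    ∀ x y t, matDeriv M (matDeriv M (curl2 ξ)) x y t = curl2 f x y t :=
  vorticity_equation_uniform_flow_general M ξ f hξ hgalbrun
end

section
/- Let ξ : ℝ² × ℝ → ℝ² be a C³ solution of the Galbrun equation (∂_t + M(y) ∂_x)² ξ − ∇(div ξ) = f where the Mach profile M depends (smoothly) on y, and f is C¹. Then ψ := curl ξ satisfies (∂_t + M(y) ∂_x)² ψ = 2 M'(y) (∂_t + M(y) ∂_x)(∂_x ξ₁) + curl f, where ξ₁ is the first component of ξ and curl v = ∂₁v₂ − ∂₂v₁. -/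
/-- Material derivative with Mach profile `M(y)`. -/
noncomputable def matDerivY (M : ℝ → ℝ) (u : ℝ → ℝ → ℝ → ℝ) (x y t : ℝ) : ℝ :=
  pdt u x y t + M y * pdx u x y t


noncomputable section VortAux

namespace VortAux

abbrev E2 : Type := (ℝ × ℝ) × ℝ
def vx : E2 := ((1,0),0)
def vy : E2 := ((0,1),0)
def vt : E2 := ((0,0),1)

/-- Directional derivative. -/
def Dd (v : E2) (g : E2 → ℝ) (p : E2) : ℝ := fderiv ℝ g p v

theorem contDiff_Dd {n : WithTop ℕ∞} {g : E2 → ℝ} (hg : ContDiff ℝ (n+1) g) (v : E2) :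
    ContDiff ℝ n (Dd v g) :=
  (hg.fderiv_right le_rfl).clm_apply contDiff_const

theorem schwarz {g : E2 → ℝ} (hg : ContDiff ℝ 2 g) (v w : E2) (p : E2) :
    Dd v (Dd w g) p = Dd w (Dd v g) p := by
  have hg1 : ContDiff ℝ 1 (fderiv ℝ g) := hg.fderiv_right (by norm_num)
  have hd : ∀ q, DifferentiableAt ℝ (fderiv ℝ g) q := fun q => hg1.differentiable one_ne_zero q
  have key : ∀ u : E2, fderiv ℝ (fun q => fderiv ℝ g q u) p
      = (fderiv ℝ (fderiv ℝ g) p).flip u := by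
    intro u
    rw [fderiv_clm_apply (hd p) (differentiableAt_const u)]
    simp
  have hsym := second_derivative_symmetric
    (f := g) (f' := fderiv ℝ g) (f'' := fderiv ℝ (fderiv ℝ g) p) (x := p)
    (fun q => ((hg.differentiable (by norm_num)) q).hasFDerivAt)
    ((hd p).hasFDerivAt) v w
  show fderiv ℝ (fun q => fderiv ℝ g q w) p v = fderiv ℝ (fun q => fderiv ℝ g q v) p w
  rw [key w, key v]
  simpa using hsym

/-- derivative of `p ↦ c p.1.2` in direction `v`. -/
theorem fderiv_comp_y (c : ℝ → ℝ) (hc : Differentiable ℝ c) (p : E2) (v : E2) :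
    fderiv ℝ (fun q : E2 => c q.1.2) p v = deriv c p.1.2 * v.1.2 := by
  have L : E2 →L[ℝ] ℝ :=
    (ContinuousLinearMap.snd ℝ ℝ ℝ).comp (ContinuousLinearMap.fst ℝ (ℝ × ℝ) ℝ)
  have hL : HasFDerivAt (fun q : E2 => q.1.2)
      ((ContinuousLinearMap.snd ℝ ℝ ℝ).comp (ContinuousLinearMap.fst ℝ (ℝ × ℝ) ℝ)) p :=
    ((ContinuousLinearMap.snd ℝ ℝ ℝ).comp (ContinuousLinearMap.fst ℝ (ℝ × ℝ) ℝ)).hasFDerivAt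
  have h := ((hc p.1.2).hasDerivAt).comp_hasFDerivAt p hL
  have h' : HasFDerivAt (fun q : E2 => c q.1.2)
      (deriv c p.1.2 • (ContinuousLinearMap.snd ℝ ℝ ℝ).comp (ContinuousLinearMap.fst ℝ (ℝ × ℝ) ℝ)) p := h
  rw [h'.fderiv]
  simp [mul_comm]

theorem contDiff_comp_y {n : WithTop ℕ∞} {c : ℝ → ℝ} (hc : ContDiff ℝ n c) :
    ContDiff ℝ n (fun q : E2 => c q.1.2) :=
  hc.comp (contDiff_snd.comp contDiff_fst)


section DOp
variable (M : ℝ → ℝ)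

/-- Uncurried material derivative. -/
def Dm (g : E2 → ℝ) (p : E2) : ℝ := Dd vt g p + M p.1.2 * Dd vx g p

variable {M}
variable (hM : ContDiff ℝ (⊤ : ℕ∞) M)
include hM

theorem contDiff_M' : ContDiff ℝ (⊤ : ℕ∞) (deriv M) :=
  (contDiff_infty_iff_deriv.mp (hM.of_le (by simp))).2

theorem contDiff_Dm {n : WithTop ℕ∞} {g : E2 → ℝ} (hg : ContDiff ℝ (n+1) g)
    (hn : n ≤ ((⊤ : ℕ∞) : WithTop ℕ∞) := by exact WithTop.coe_le_coe.mpr le_top) :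
    ContDiff ℝ n (Dm M g) :=
  (contDiff_Dd hg vt).add
    (((contDiff_comp_y (hM.of_le hn)).mul (contDiff_Dd hg vx)))

omit hM

theorem Dd_sub {a b : E2 → ℝ} (ha : Differentiable ℝ a) (hb : Differentiable ℝ b)
    (v : E2) (p : E2) :
    Dd v (fun q => a q - b q) p = Dd v a p - Dd v b p := by
  unfold Dd
  rw [fderiv_fun_sub (ha p) (hb p)]
  simp

theorem Dm_sub {a b : E2 → ℝ} (ha : Differentiable ℝ a) (hb : Differentiable ℝ b)
    (p : E2) :
    Dm M (fun q => a q - b q) p = Dm M a p - Dm M b p := by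
  unfold Dm
  rw [Dd_sub ha hb, Dd_sub ha hb]
  ring

theorem Dm_add {a b : E2 → ℝ} (ha : Differentiable ℝ a) (hb : Differentiable ℝ b)
    (p : E2) :
    Dm M (fun q => a q + b q) p = Dm M a p + Dm M b p := by
  unfold Dm Dd
  rw [fderiv_fun_add (ha p) (hb p)]
  simp
  ring

include hM

/-- directional derivative of the material derivative. -/
theorem Dd_Dm {g : E2 → ℝ} (hg : ContDiff ℝ 2 g) (v : E2) (p : E2) :
    Dd v (Dm M g) p = Dd v (Dd vt g) p + M p.1.2 * Dd v (Dd vx g) p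
      + deriv M p.1.2 * v.1.2 * Dd vx g p := by
  have hMy : Differentiable ℝ (fun q : E2 => M q.1.2) :=
    (contDiff_comp_y (n := 1) (hM.of_le (by simp))).differentiable one_ne_zero
  have hDt : Differentiable ℝ (Dd vt g) :=
    (contDiff_Dd (n := 1) (hg.of_le (by norm_num)) vt).differentiable one_ne_zero
  have hDx : Differentiable ℝ (Dd vx g) :=
    (contDiff_Dd (n := 1) (hg.of_le (by norm_num)) vx).differentiable one_ne_zero
  have h1 : fderiv ℝ (fun q : E2 => Dd vt g q + M q.1.2 * Dd vx g q) p
      = fderiv ℝ (Dd vt g) p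
        + (M p.1.2 • fderiv ℝ (Dd vx g) p + Dd vx g p • fderiv ℝ (fun q : E2 => M q.1.2) p) := by
    rw [fderiv_fun_add (hDt p) (by exact (hMy p).mul (hDx p) : DifferentiableAt ℝ (fun q : E2 => M q.1.2 * Dd vx g q) p),
      fderiv_fun_mul (hMy p) (hDx p)]
  show fderiv ℝ (fun q : E2 => Dd vt g q + M q.1.2 * Dd vx g q) p v = _
  rw [h1]
  have h2 : fderiv ℝ (fun q : E2 => M q.1.2) p v = deriv M p.1.2 * v.1.2 :=
    fderiv_comp_y M (hM.differentiable (by simp)) p v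
  simp only [ContinuousLinearMap.add_apply, ContinuousLinearMap.smul_apply, h2]
  unfold Dd
  simp only [smul_eq_mul]
  ring

theorem commX {g : E2 → ℝ} (hg : ContDiff ℝ 2 g) (p : E2) :
    Dd vx (Dm M g) p = Dm M (Dd vx g) p := by
  rw [Dd_Dm hM hg vx p, schwarz hg vx vt p]
  show _ = Dd vt (Dd vx g) p + M p.1.2 * Dd vx (Dd vx g) p
  simp [vx]

theorem commY {g : E2 → ℝ} (hg : ContDiff ℝ 2 g) (p : E2) :
    Dd vy (Dm M g) p = Dm M (Dd vy g) p + deriv M p.1.2 * Dd vx g p := by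
  rw [Dd_Dm hM hg vy p, schwarz hg vy vt p, schwarz hg vy vx p]
  show _ = (Dd vt (Dd vy g) p + M p.1.2 * Dd vx (Dd vy g) p) + _
  simp [vy]

theorem Dm_mulM' {h : E2 → ℝ} (hh : ContDiff ℝ 1 h) (p : E2) :
    Dm M (fun q => deriv M q.1.2 * h q) p = deriv M p.1.2 * Dm M h p := by
  have hM' : ContDiff ℝ (⊤ : ℕ∞) (deriv M) := contDiff_M' hM
  have hM'd : Differentiable ℝ (deriv M) := hM'.differentiable (by simp)
  have hMy : Differentiable ℝ (fun q : E2 => deriv M q.1.2) :=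
    (contDiff_comp_y (n := 1) (hM'.of_le (mod_cast le_top))).differentiable one_ne_zero
  have hhd : Differentiable ℝ h := hh.differentiable one_ne_zero
  have key : ∀ v : E2, v.1.2 = 0 →
      Dd v (fun q => deriv M q.1.2 * h q) p = deriv M p.1.2 * Dd v h p := by
    intro v hv
    show fderiv ℝ (fun q : E2 => deriv M q.1.2 * h q) p v = _
    rw [fderiv_fun_mul (hMy p) (hhd p)]
    have h2 : fderiv ℝ (fun q : E2 => deriv M q.1.2) p v = deriv (deriv M) p.1.2 * v.1.2 :=
      fderiv_comp_y (deriv M) hM'd p v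
    simp only [ContinuousLinearMap.add_apply, ContinuousLinearMap.smul_apply, h2, hv,
      mul_zero, smul_eq_mul, Dd]
    ring
  unfold Dm
  rw [key vt rfl, key vx rfl]
  ring

end DOp


section Lines

theorem derivX_eq (g : E2 → ℝ) {x y t : ℝ} (hg : DifferentiableAt ℝ g ((x,y),t)) :
    deriv (fun a => g ((a,y),t)) x = Dd vx g ((x,y),t) := by
  have h1 := ((hasDerivAt_id x).smul_const vx).add_const ((((0:ℝ),y),t) : E2)
  have h2 : (fun a : ℝ => a • vx + ((((0:ℝ),y),t) : E2)) = fun a : ℝ => (((a,y),t) : E2) := by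
    funext a; simp [vx, Prod.ext_iff]
  have hL : HasDerivAt (fun a : ℝ => (((a,y),t) : E2)) vx x := by
    rw [← h2]; simpa using h1
  have h3 := hg.hasFDerivAt.comp_hasDerivAt x hL
  exact h3.deriv

theorem derivY_eq (g : E2 → ℝ) {x y t : ℝ} (hg : DifferentiableAt ℝ g ((x,y),t)) :
    deriv (fun b => g ((x,b),t)) y = Dd vy g ((x,y),t) := by
  have h1 := ((hasDerivAt_id y).smul_const vy).add_const (((x,(0:ℝ)),t) : E2)
  have h2 : (fun b : ℝ => b • vy + (((x,(0:ℝ)),t) : E2)) = fun b : ℝ => (((x,b),t) : E2) := by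
    funext b; simp [vy, Prod.ext_iff]
  have hL : HasDerivAt (fun b : ℝ => (((x,b),t) : E2)) vy y := by
    rw [← h2]; simpa using h1
  have h3 := hg.hasFDerivAt.comp_hasDerivAt y hL
  exact h3.deriv

theorem derivT_eq (g : E2 → ℝ) {x y t : ℝ} (hg : DifferentiableAt ℝ g ((x,y),t)) :
    deriv (fun s => g ((x,y),s)) t = Dd vt g ((x,y),t) := by
  have h1 := ((hasDerivAt_id t).smul_const vt).add_const (((x,y),(0:ℝ)) : E2)
  have h2 : (fun s : ℝ => s • vt + (((x,y),(0:ℝ)) : E2)) = fun s : ℝ => (((x,y),s) : E2) := by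
    funext s; simp [vt, Prod.ext_iff]
  have hL : HasDerivAt (fun s : ℝ => (((x,y),s) : E2)) vt t := by
    rw [← h2]; simpa using h1
  have h3 := hg.hasFDerivAt.comp_hasDerivAt t hL
  exact h3.deriv

end Lines


section Translate

theorem pdx_eq (g : E2 → ℝ) (hg : Differentiable ℝ g) (x y t : ℝ) :
    pdx (fun a b s => g ((a,b),s)) x y t = Dd vx g ((x,y),t) :=
  derivX_eq g (hg _)

theorem pdy_eq (g : E2 → ℝ) (hg : Differentiable ℝ g) (x y t : ℝ) :
    pdy (fun a b s => g ((a,b),s)) x y t = Dd vy g ((x,y),t) :=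
  derivY_eq g (hg _)

theorem pdt_eq (g : E2 → ℝ) (hg : Differentiable ℝ g) (x y t : ℝ) :
    pdt (fun a b s => g ((a,b),s)) x y t = Dd vt g ((x,y),t) :=
  derivT_eq g (hg _)

theorem matDeriv_eq (M : ℝ → ℝ) (g : E2 → ℝ) (hg : Differentiable ℝ g) (x y t : ℝ) :
    matDerivY M (fun a b s => g ((a,b),s)) x y t = Dm M g ((x,y),t) := by
  unfold matDerivY
  rw [pdt_eq g hg, pdx_eq g hg]
  rfl

end Translate

section Core

theorem core (M : ℝ → ℝ) (hM : ContDiff ℝ (⊤ : ℕ∞) M)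
    (G1 G2 F1 F2 : E2 → ℝ) (hG1 : ContDiff ℝ 3 G1) (hG2 : ContDiff ℝ 3 G2)
    (hE1 : ∀ q, Dm M (Dm M G1) q - Dd vx (fun r => Dd vx G1 r + Dd vy G2 r) q = F1 q)
    (hE2 : ∀ q, Dm M (Dm M G2) q - Dd vy (fun r => Dd vx G1 r + Dd vy G2 r) q = F2 q)
    (p : E2) :
    Dm M (Dm M (fun q => Dd vx G2 q - Dd vy G1 q)) p
      = 2 * deriv M p.1.2 * Dm M (Dd vx G1) p + (Dd vx F2 p - Dd vy F1 p) := by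
  -- smoothness inventory
  have h2G1 : ContDiff ℝ 2 G1 := hG1.of_le (by norm_num)
  have h2G2 : ContDiff ℝ 2 G2 := hG2.of_le (by norm_num)
  have hDdG1 : ∀ v, ContDiff ℝ 2 (Dd v G1) := fun v => contDiff_Dd (hG1.of_le (by norm_num)) v
  have hDdG2 : ∀ v, ContDiff ℝ 2 (Dd v G2) := fun v => contDiff_Dd (hG2.of_le (by norm_num)) v
  have hdv : ContDiff ℝ 2 (fun r => Dd vx G1 r + Dd vy G2 r) := (hDdG1 vx).add (hDdG2 vy)
  have hDddv : ∀ v, ContDiff ℝ 1 (Dd v (fun r => Dd vx G1 r + Dd vy G2 r)) :=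
    fun v => contDiff_Dd (hdv.of_le (by norm_num)) v
  have hDmG1 : ContDiff ℝ 2 (Dm M G1) := contDiff_Dm hM (hG1.of_le (by norm_num))
  have hDmG2 : ContDiff ℝ 2 (Dm M G2) := contDiff_Dm hM (hG2.of_le (by norm_num))
  have hDmDmG1 : ContDiff ℝ 1 (Dm M (Dm M G1)) := contDiff_Dm hM (hDmG1.of_le (by norm_num))
  have hDmDmG2 : ContDiff ℝ 1 (Dm M (Dm M G2)) := contDiff_Dm hM (hDmG2.of_le (by norm_num))
  have hDmDdG1 : ∀ v, ContDiff ℝ 1 (Dm M (Dd v G1)) :=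
    fun v => contDiff_Dm hM ((hDdG1 v).of_le (by norm_num))
  have hDmDdG2 : ∀ v, ContDiff ℝ 1 (Dm M (Dd v G2)) :=
    fun v => contDiff_Dm hM ((hDdG2 v).of_le (by norm_num))
  have hM'1 : ContDiff ℝ 1 (deriv M) := (contDiff_M' hM).of_le (mod_cast le_top)
  have hprod : ContDiff ℝ 1 (fun q : E2 => deriv M q.1.2 * Dd vx G1 q) :=
    (contDiff_comp_y hM'1).mul ((hDdG1 vx).of_le (by norm_num))
  -- function-level equalities for F1, F2
  have hF1 : F1 = fun q => Dm M (Dm M G1) q - Dd vx (fun r => Dd vx G1 r + Dd vy G2 r) q :=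
    (funext hE1).symm
  have hF2 : F2 = fun q => Dm M (Dm M G2) q - Dd vy (fun r => Dd vx G1 r + Dd vy G2 r) q :=
    (funext hE2).symm
  -- step 1: expand curl f
  have s1 : Dd vx F2 p = Dd vx (Dm M (Dm M G2)) p
      - Dd vx (Dd vy (fun r => Dd vx G1 r + Dd vy G2 r)) p := by
    rw [hF2]
    exact Dd_sub (hDmDmG2.differentiable one_ne_zero) ((hDddv vy).differentiable one_ne_zero) vx p
  have s2 : Dd vy F1 p = Dd vy (Dm M (Dm M G1)) p
      - Dd vy (Dd vx (fun r => Dd vx G1 r + Dd vy G2 r)) p := by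
    rw [hF1]
    exact Dd_sub (hDmDmG1.differentiable one_ne_zero) ((hDddv vx).differentiable one_ne_zero) vy p
  have s3 : Dd vx (Dd vy (fun r => Dd vx G1 r + Dd vy G2 r)) p
      = Dd vy (Dd vx (fun r => Dd vx G1 r + Dd vy G2 r)) p := schwarz hdv vx vy p
  -- step 4: x-commutation
  have s4 : Dd vx (Dm M (Dm M G2)) p = Dm M (Dm M (Dd vx G2)) p := by
    have a1 : Dd vx (Dm M G2) = Dm M (Dd vx G2) := funext (commX hM h2G2)
    rw [commX hM hDmG2 p, a1]
  -- step 5: y-commutation with source term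
  have s5 : Dd vy (Dm M (Dm M G1)) p = Dm M (Dm M (Dd vy G1)) p
      + 2 * deriv M p.1.2 * Dm M (Dd vx G1) p := by
    have b1 : Dd vy (Dm M G1)
        = fun q => Dm M (Dd vy G1) q + deriv M q.1.2 * Dd vx G1 q := funext (commY hM h2G1)
    have b2 : Dd vy (Dm M (Dm M G1)) p
        = Dm M (Dd vy (Dm M G1)) p + deriv M p.1.2 * Dd vx (Dm M G1) p := commY hM hDmG1 p
    rw [b2, b1, commX hM h2G1 p,
      Dm_add ((hDmDdG1 vy).differentiable one_ne_zero) (hprod.differentiable one_ne_zero) p,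
      Dm_mulM' hM ((hDdG1 vx).of_le (by norm_num)) p]
    ring
  -- step 6: expand LHS
  have s6 : Dm M (Dm M (fun q => Dd vx G2 q - Dd vy G1 q)) p
      = Dm M (Dm M (Dd vx G2)) p - Dm M (Dm M (Dd vy G1)) p := by
    have c1 : Dm M (fun q => Dd vx G2 q - Dd vy G1 q)
        = fun q => Dm M (Dd vx G2) q - Dm M (Dd vy G1) q :=
      funext (Dm_sub ((hDdG2 vx).differentiable (by norm_num))
        ((hDdG1 vy).differentiable (by norm_num)))
    rw [c1]
    exact Dm_sub ((hDmDdG2 vx).differentiable one_ne_zero)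
      ((hDmDdG1 vy).differentiable one_ne_zero) p
  rw [s6, s1, s2, s3, s4, s5]
  ring

end Core

end VortAux

/-- Lagrangian vorticity equation for a shear flow with Mach profile `M(y)`:
`D²ψ/Dt² = 2 M'(y) D(∂ξ₁/∂x)/Dt + curl f`. -/
theorem vorticity_equation_shear_flow (M : ℝ → ℝ) (hM : ContDiff ℝ (⊤ : ℕ∞) M)
    (ξ : ℝ → ℝ → ℝ → ℝ × ℝ) (f : ℝ → ℝ → ℝ → ℝ × ℝ)
    (hξ : ContDiff ℝ 3 (fun p : (ℝ × ℝ) × ℝ => ξ p.1.1 p.1.2 p.2))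
    (hf : ContDiff ℝ 1 (fun p : (ℝ × ℝ) × ℝ => f p.1.1 p.1.2 p.2))
    (hgalbrun : ∀ x y t,
      matDerivY M (matDerivY M (fun a b s => (ξ a b s).1)) x y t
          - pdx (div2 ξ) x y t = (f x y t).1
      ∧ matDerivY M (matDerivY M (fun a b s => (ξ a b s).2)) x y t
          - pdy (div2 ξ) x y t = (f x y t).2) :
    ∀ x y t,
      matDerivY M (matDerivY M (curl2 ξ)) x y t
        = 2 * deriv M y
            * matDerivY M (pdx (fun a b s => (ξ a b s).1)) x y t
          + curl2 f x y t := by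
  intro x y t
  classical
  have hG1 : ContDiff ℝ 3 (fun q : VortAux.E2 => (ξ q.1.1 q.1.2 q.2).1) := contDiff_fst.comp hξ
  have hG2 : ContDiff ℝ 3 (fun q : VortAux.E2 => (ξ q.1.1 q.1.2 q.2).2) := contDiff_snd.comp hξ
  have dG1 : Differentiable ℝ (fun q : VortAux.E2 => (ξ q.1.1 q.1.2 q.2).1) :=
    hG1.differentiable (by norm_num)
  have dG2 : Differentiable ℝ (fun q : VortAux.E2 => (ξ q.1.1 q.1.2 q.2).2) :=
    hG2.differentiable (by norm_num)
  have hDdG1 : ∀ v, ContDiff ℝ 2 (VortAux.Dd v (fun q : VortAux.E2 => (ξ q.1.1 q.1.2 q.2).1)) :=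
    fun v => VortAux.contDiff_Dd (hG1.of_le (by norm_num)) v
  have hDdG2 : ∀ v, ContDiff ℝ 2 (VortAux.Dd v (fun q : VortAux.E2 => (ξ q.1.1 q.1.2 q.2).2)) :=
    fun v => VortAux.contDiff_Dd (hG2.of_le (by norm_num)) v
  have hdv : ContDiff ℝ 2 (fun r : VortAux.E2 =>
      VortAux.Dd VortAux.vx (fun q : VortAux.E2 => (ξ q.1.1 q.1.2 q.2).1) r
        + VortAux.Dd VortAux.vy (fun q : VortAux.E2 => (ξ q.1.1 q.1.2 q.2).2) r) :=
    (hDdG1 VortAux.vx).add (hDdG2 VortAux.vy)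
  have hψ : ContDiff ℝ 2 (fun r : VortAux.E2 =>
      VortAux.Dd VortAux.vx (fun q : VortAux.E2 => (ξ q.1.1 q.1.2 q.2).2) r
        - VortAux.Dd VortAux.vy (fun q : VortAux.E2 => (ξ q.1.1 q.1.2 q.2).1) r) :=
    (hDdG2 VortAux.vx).sub (hDdG1 VortAux.vy)
  have hDmψ : ContDiff ℝ 1 (VortAux.Dm M (fun r : VortAux.E2 =>
      VortAux.Dd VortAux.vx (fun q : VortAux.E2 => (ξ q.1.1 q.1.2 q.2).2) r
        - VortAux.Dd VortAux.vy (fun q : VortAux.E2 => (ξ q.1.1 q.1.2 q.2).1) r)) :=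
    VortAux.contDiff_Dm hM (hψ.of_le (by norm_num))
  have hDmG1 : ContDiff ℝ 2 (VortAux.Dm M (fun q : VortAux.E2 => (ξ q.1.1 q.1.2 q.2).1)) :=
    VortAux.contDiff_Dm hM (hG1.of_le (by norm_num))
  have hDmG2 : ContDiff ℝ 2 (VortAux.Dm M (fun q : VortAux.E2 => (ξ q.1.1 q.1.2 q.2).2)) :=
    VortAux.contDiff_Dm hM (hG2.of_le (by norm_num))
  have hDmDdG1x : ContDiff ℝ 1 (VortAux.Dm M (VortAux.Dd VortAux.vx
      (fun q : VortAux.E2 => (ξ q.1.1 q.1.2 q.2).1))) :=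
    VortAux.contDiff_Dm hM ((hDdG1 VortAux.vx).of_le (by norm_num))
  -- translation: divergence
  have hdiv : div2 ξ = fun a b s =>
      (fun r : VortAux.E2 =>
        VortAux.Dd VortAux.vx (fun q : VortAux.E2 => (ξ q.1.1 q.1.2 q.2).1) r
          + VortAux.Dd VortAux.vy (fun q : VortAux.E2 => (ξ q.1.1 q.1.2 q.2).2) r) ((a,b),s) := by
    funext a b s
    have h1 : pdx (fun a' b' s' => (ξ a' b' s').1) a b s
        = VortAux.Dd VortAux.vx (fun q : VortAux.E2 => (ξ q.1.1 q.1.2 q.2).1) ((a,b),s) :=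
      VortAux.pdx_eq (fun q : VortAux.E2 => (ξ q.1.1 q.1.2 q.2).1) dG1 a b s
    have h2 : pdy (fun a' b' s' => (ξ a' b' s').2) a b s
        = VortAux.Dd VortAux.vy (fun q : VortAux.E2 => (ξ q.1.1 q.1.2 q.2).2) ((a,b),s) :=
      VortAux.pdy_eq (fun q : VortAux.E2 => (ξ q.1.1 q.1.2 q.2).2) dG2 a b s
    show pdx (fun a' b' s' => (ξ a' b' s').1) a b s
        + pdy (fun a' b' s' => (ξ a' b' s').2) a b s = _
    rw [h1, h2]
  -- translation: curl of ξ
  have hcurl : curl2 ξ = fun a b s =>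
      (fun r : VortAux.E2 =>
        VortAux.Dd VortAux.vx (fun q : VortAux.E2 => (ξ q.1.1 q.1.2 q.2).2) r
          - VortAux.Dd VortAux.vy (fun q : VortAux.E2 => (ξ q.1.1 q.1.2 q.2).1) r) ((a,b),s) := by
    funext a b s
    have h1 : pdx (fun a' b' s' => (ξ a' b' s').2) a b s
        = VortAux.Dd VortAux.vx (fun q : VortAux.E2 => (ξ q.1.1 q.1.2 q.2).2) ((a,b),s) :=
      VortAux.pdx_eq (fun q : VortAux.E2 => (ξ q.1.1 q.1.2 q.2).2) dG2 a b s
    have h2 : pdy (fun a' b' s' => (ξ a' b' s').1) a b s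
        = VortAux.Dd VortAux.vy (fun q : VortAux.E2 => (ξ q.1.1 q.1.2 q.2).1) ((a,b),s) :=
      VortAux.pdy_eq (fun q : VortAux.E2 => (ξ q.1.1 q.1.2 q.2).1) dG1 a b s
    show pdx (fun a' b' s' => (ξ a' b' s').2) a b s
        - pdy (fun a' b' s' => (ξ a' b' s').1) a b s = _
    rw [h1, h2]
  -- translated Galbrun equations
  have hE1 : ∀ q : VortAux.E2,
      VortAux.Dm M (VortAux.Dm M (fun r : VortAux.E2 => (ξ r.1.1 r.1.2 r.2).1)) q
        - VortAux.Dd VortAux.vx (fun r : VortAux.E2 =>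
            VortAux.Dd VortAux.vx (fun q' : VortAux.E2 => (ξ q'.1.1 q'.1.2 q'.2).1) r
              + VortAux.Dd VortAux.vy (fun q' : VortAux.E2 => (ξ q'.1.1 q'.1.2 q'.2).2) r) q
        = (fun r : VortAux.E2 => (f r.1.1 r.1.2 r.2).1) q := by
    rintro ⟨⟨a,b⟩,s⟩
    have t1 : matDerivY M (fun a' b' s' => (ξ a' b' s').1)
        = fun a' b' s' => VortAux.Dm M (fun r : VortAux.E2 => (ξ r.1.1 r.1.2 r.2).1) ((a',b'),s') := by
      funext a' b' s'
      exact VortAux.matDeriv_eq M (fun r : VortAux.E2 => (ξ r.1.1 r.1.2 r.2).1) dG1 a' b' s'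
    have t2 : matDerivY M (matDerivY M (fun a' b' s' => (ξ a' b' s').1)) a b s
        = VortAux.Dm M (VortAux.Dm M (fun r : VortAux.E2 => (ξ r.1.1 r.1.2 r.2).1)) ((a,b),s) := by
      rw [t1]
      exact VortAux.matDeriv_eq M _ (hDmG1.differentiable (by norm_num)) a b s
    have t3 : pdx (div2 ξ) a b s
        = VortAux.Dd VortAux.vx (fun r : VortAux.E2 =>
            VortAux.Dd VortAux.vx (fun q' : VortAux.E2 => (ξ q'.1.1 q'.1.2 q'.2).1) r
              + VortAux.Dd VortAux.vy (fun q' : VortAux.E2 => (ξ q'.1.1 q'.1.2 q'.2).2) r) ((a,b),s) := by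
      rw [hdiv]
      exact VortAux.pdx_eq _ (hdv.differentiable (by norm_num)) a b s
    have := (hgalbrun a b s).1
    rw [t2, t3] at this
    exact this
  have hE2 : ∀ q : VortAux.E2,
      VortAux.Dm M (VortAux.Dm M (fun r : VortAux.E2 => (ξ r.1.1 r.1.2 r.2).2)) q
        - VortAux.Dd VortAux.vy (fun r : VortAux.E2 =>
            VortAux.Dd VortAux.vx (fun q' : VortAux.E2 => (ξ q'.1.1 q'.1.2 q'.2).1) r
              + VortAux.Dd VortAux.vy (fun q' : VortAux.E2 => (ξ q'.1.1 q'.1.2 q'.2).2) r) q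
        = (fun r : VortAux.E2 => (f r.1.1 r.1.2 r.2).2) q := by
    rintro ⟨⟨a,b⟩,s⟩
    have t1 : matDerivY M (fun a' b' s' => (ξ a' b' s').2)
        = fun a' b' s' => VortAux.Dm M (fun r : VortAux.E2 => (ξ r.1.1 r.1.2 r.2).2) ((a',b'),s') := by
      funext a' b' s'
      exact VortAux.matDeriv_eq M (fun r : VortAux.E2 => (ξ r.1.1 r.1.2 r.2).2) dG2 a' b' s'
    have t2 : matDerivY M (matDerivY M (fun a' b' s' => (ξ a' b' s').2)) a b s
        = VortAux.Dm M (VortAux.Dm M (fun r : VortAux.E2 => (ξ r.1.1 r.1.2 r.2).2)) ((a,b),s) := by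
      rw [t1]
      exact VortAux.matDeriv_eq M _ (hDmG2.differentiable (by norm_num)) a b s
    have t3 : pdy (div2 ξ) a b s
        = VortAux.Dd VortAux.vy (fun r : VortAux.E2 =>
            VortAux.Dd VortAux.vx (fun q' : VortAux.E2 => (ξ q'.1.1 q'.1.2 q'.2).1) r
              + VortAux.Dd VortAux.vy (fun q' : VortAux.E2 => (ξ q'.1.1 q'.1.2 q'.2).2) r) ((a,b),s) := by
      rw [hdiv]
      exact VortAux.pdy_eq _ (hdv.differentiable (by norm_num)) a b s
    have := (hgalbrun a b s).2
    rw [t2, t3] at this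
    exact this
  -- translate LHS of the goal
  have lhs_eq : matDerivY M (matDerivY M (curl2 ξ)) x y t
      = VortAux.Dm M (VortAux.Dm M (fun r : VortAux.E2 =>
          VortAux.Dd VortAux.vx (fun q : VortAux.E2 => (ξ q.1.1 q.1.2 q.2).2) r
            - VortAux.Dd VortAux.vy (fun q : VortAux.E2 => (ξ q.1.1 q.1.2 q.2).1) r)) ((x,y),t) := by
    have t1 : matDerivY M (curl2 ξ)
        = fun a b s => VortAux.Dm M (fun r : VortAux.E2 =>
            VortAux.Dd VortAux.vx (fun q : VortAux.E2 => (ξ q.1.1 q.1.2 q.2).2) r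
              - VortAux.Dd VortAux.vy (fun q : VortAux.E2 => (ξ q.1.1 q.1.2 q.2).1) r) ((a,b),s) := by
      rw [hcurl]
      funext a b s
      exact VortAux.matDeriv_eq M _ (hψ.differentiable (by norm_num)) a b s
    rw [t1]
    exact VortAux.matDeriv_eq M _ (hDmψ.differentiable (by norm_num)) x y t
  -- translate the source term
  have src_eq : matDerivY M (pdx (fun a b s => (ξ a b s).1)) x y t
      = VortAux.Dm M (VortAux.Dd VortAux.vx
          (fun q : VortAux.E2 => (ξ q.1.1 q.1.2 q.2).1)) ((x,y),t) := by
    have t1 : pdx (fun a b s => (ξ a b s).1)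
        = fun a b s => VortAux.Dd VortAux.vx
            (fun q : VortAux.E2 => (ξ q.1.1 q.1.2 q.2).1) ((a,b),s) := by
      funext a b s
      exact VortAux.pdx_eq (fun q : VortAux.E2 => (ξ q.1.1 q.1.2 q.2).1) dG1 a b s
    rw [t1]
    exact VortAux.matDeriv_eq M _ ((hDdG1 VortAux.vx).differentiable (by norm_num)) x y t
  -- translate curl of f
  have dF1 : Differentiable ℝ (fun q : VortAux.E2 => (f q.1.1 q.1.2 q.2).1) :=
    (contDiff_fst.comp hf).differentiable (by norm_num)
  have dF2 : Differentiable ℝ (fun q : VortAux.E2 => (f q.1.1 q.1.2 q.2).2) :=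
    (contDiff_snd.comp hf).differentiable (by norm_num)
  have curlf_eq : curl2 f x y t
      = VortAux.Dd VortAux.vx (fun q : VortAux.E2 => (f q.1.1 q.1.2 q.2).2) ((x,y),t)
        - VortAux.Dd VortAux.vy (fun q : VortAux.E2 => (f q.1.1 q.1.2 q.2).1) ((x,y),t) := by
    have h1 : pdx (fun a' b' s' => (f a' b' s').2) x y t
        = VortAux.Dd VortAux.vx (fun q : VortAux.E2 => (f q.1.1 q.1.2 q.2).2) ((x,y),t) :=
      VortAux.pdx_eq (fun q : VortAux.E2 => (f q.1.1 q.1.2 q.2).2) dF2 x y t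
    have h2 : pdy (fun a' b' s' => (f a' b' s').1) x y t
        = VortAux.Dd VortAux.vy (fun q : VortAux.E2 => (f q.1.1 q.1.2 q.2).1) ((x,y),t) :=
      VortAux.pdy_eq (fun q : VortAux.E2 => (f q.1.1 q.1.2 q.2).1) dF1 x y t
    show pdx (fun a' b' s' => (f a' b' s').2) x y t
        - pdy (fun a' b' s' => (f a' b' s').1) x y t = _
    rw [h1, h2]
  rw [lhs_eq, src_eq, curlf_eq]
  exact VortAux.core M hM _ _ _ _ hG1 hG2 hE1 hE2 ((x,y),t)
end VortAux
end
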